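/- Any two edge-disjoint 4-cycles whose vertex sets are not disjoint and whose union contains 6, 7 or 8 vertices form one of exactly four configurations up to isomorphism: two non-isomorphic (6,2)-configurations (one of which is the double-diamond, two 4-cycles sharing a diagonal), a unique (7,2)-configuration, and a unique (8,2)-configuration; in particular, no (5,2)-configuration exists. -/

import Mathlib

open Finset

/-- The edge set of the 4-cycle `(a, b, c, d)`: edges {a,b}, {b,c}, {c,d}, {d,a}. -/
def cycEdges {V : Type*} [DecidableEq V] (a b c d : V) : Finset (Sym2 V) :=
  {s(a, b), s(b, c), s(c, d), s(d, a)}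

/-- `E` is the edge set of a 4-cycle on four distinct vertices. -/
def IsFourCycle {V : Type*} [DecidableEq V] (E : Finset (Sym2 V)) : Prop :=
  ∃ a b c d : V, ([a, b, c, d] : List V).Nodup ∧ E = cycEdges a b c d

/-- The set of vertices covered by a set of edges. -/
def edgeVerts {V : Type*} [DecidableEq V] (E : Finset (Sym2 V)) : Finset V :=
  E.sup (Sym2.lift ⟨fun x y => ({x, y} : Finset V), fun x y => Finset.pair_comm x y⟩)

/-- A `(k, l)`-configuration: a set of `l` pairwise edge-disjoint 4-cycles whose
union contains exactly `k` vertices. -/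
def IsConfiguration {V : Type*} [DecidableEq V] (k l : ℕ)
    (D : Finset (Finset (Sym2 V))) : Prop :=
  D.card = l ∧ (∀ E ∈ D, IsFourCycle E) ∧
    (∀ E ∈ D, ∀ F ∈ D, E ≠ F → Disjoint E F) ∧
    (D.sup edgeVerts).card = k

/-- `C` is a 4-cycle system: a collection of 4-cycles whose edge sets partition
the edge set of the complete graph on `V`. -/
def IsFourCycleSystem {V : Type*} [DecidableEq V] (C : Finset (Finset (Sym2 V))) : Prop :=
  (∀ E ∈ C, IsFourCycle E) ∧ ∀ e : Sym2 V, ¬ e.IsDiag → ∃! E, E ∈ C ∧ e ∈ E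

/-- `C` is a 4-cycle packing: a set of pairwise edge-disjoint 4-cycles. -/
def IsFourCyclePacking {V : Type*} [DecidableEq V] (C : Finset (Finset (Sym2 V))) : Prop :=
  (∀ E ∈ C, IsFourCycle E) ∧ ∀ E ∈ C, ∀ F ∈ C, E ≠ F → Disjoint E F

/-- `C` is `r`-sparse: it contains no `(j+3, j)`-configuration for `2 ≤ j ≤ r`. -/
def RSparse {V : Type*} [DecidableEq V] (r : ℕ) (C : Finset (Finset (Sym2 V))) : Prop :=
  ∀ j, 2 ≤ j → j ≤ r → ∀ D ⊆ C, ¬ IsConfiguration (j + 3) j D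

/-- Two 4-cycles form a double-diamond: they are `(a,b,c,d)` and `(a,e,c,f)`,
sharing the diagonal {a,c}. -/
def IsDoubleDiamond {V : Type*} [DecidableEq V] (E F : Finset (Sym2 V)) : Prop :=
  ∃ a b c d e f : V, ([a, b, c, d, e, f] : List V).Nodup ∧
    E = cycEdges a b c d ∧ F = cycEdges a e c f

/-- `C` is D-avoiding: no two of its 4-cycles form a double-diamond. -/
def DAvoiding {V : Type*} [DecidableEq V] (C : Finset (Finset (Sym2 V))) : Prop :=
  ∀ E ∈ C, ∀ F ∈ C, ¬ IsDoubleDiamond E F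

/-- `C` is strictly `r`-sparse: `r`-sparse and D-avoiding. -/
def StrictlyRSparse {V : Type*} [DecidableEq V] (r : ℕ)
    (C : Finset (Finset (Sym2 V))) : Prop :=
  RSparse r C ∧ DAvoiding C

/-- Configurations `A` and `B` are isomorphic: there is a bijection between their
vertex sets mapping each 4-cycle of `A` to a 4-cycle of `B`. -/
def ConfigIso {V W : Type*} [DecidableEq V] [DecidableEq W]
    (A : Finset (Finset (Sym2 V))) (B : Finset (Finset (Sym2 W))) : Prop :=
  ∃ φ : V → W, Set.BijOn φ ↑(A.sup edgeVerts) ↑(B.sup edgeVerts) ∧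
    ∀ E ∈ A, E.image (Sym2.map φ) ∈ B

/-!
The non-edges of a 4-cycle form a perfect matching (its two diagonals), so among any three of
its vertices at least two pairs are edges. Two edge-disjoint 4-cycles therefore share at most two
vertices, and their union has 6, 7 or 8 vertices. With one or no shared vertex the configuration
is determined; with two shared vertices `x, y`, either `{x, y}` is a diagonal of both cycles (the
double-diamond) or it is an edge of one cycle and a diagonal of the other. An isomorphism maps
shared vertices to shared vertices and, being injective, preserves whether a pair is an edge, so
these two `(6,2)`-configurations are not isomorphic.
-/

section FourCycles

variable {V : Type*} [DecidableEq V]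

theorem mem_edgeVerts {E : Finset (Sym2 V)} {v : V} :
    v ∈ edgeVerts E ↔ ∃ e ∈ E, v ∈ e := by
  simp only [edgeVerts, mem_sup]
  refine exists_congr fun e => and_congr_right fun _ => ?_
  induction e using Sym2.ind with
  | h x y => simp

theorem edgeVerts_cycEdges (a b c d : V) : edgeVerts (cycEdges a b c d) = {a, b, c, d} := by
  ext v
  simp only [mem_edgeVerts, cycEdges, mem_insert, mem_singleton, exists_eq_or_imp,
    exists_eq_left, Sym2.mem_iff]
  tauto

theorem mem_cycEdges {a b c d : V} {e : Sym2 V} :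
    e ∈ cycEdges a b c d ↔ e = s(a, b) ∨ e = s(b, c) ∨ e = s(c, d) ∨ e = s(d, a) := by
  simp [cycEdges]

theorem cycEdges_rotate (a b c d : V) : cycEdges a b c d = cycEdges b c d a := by
  ext; simp only [mem_cycEdges]; tauto

theorem cycEdges_reverse (a b c d : V) : cycEdges a b c d = cycEdges a d c b := by
  ext; simp only [mem_cycEdges, Sym2.eq_swap (a := a), Sym2.eq_swap (b := c)]; tauto

theorem nodup_of_toFinset_eq {l : List V} {s : Finset V} (hl : l.toFinset = s)
    (hs : s.card = l.length) : l.Nodup :=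
  Multiset.coe_nodup.mp <| Multiset.toFinset_card_eq_card_iff_nodup.mp (hl.symm ▸ hs :)

namespace IsFourCycle

variable {E : Finset (Sym2 V)}

theorem card_edgeVerts (hE : IsFourCycle E) : (edgeVerts E).card = 4 := by
  obtain ⟨a, b, c, d, h, rfl⟩ := hE
  simpa [edgeVerts_cycEdges] using List.toFinset_card_of_nodup h

theorem exists_eq_cycEdges_of_mem (hE : IsFourCycle E) {x : V} (hx : x ∈ edgeVerts E) :
    ∃ u v w, ([x, u, v, w] : List V).Nodup ∧ E = cycEdges x u v w := by
  obtain ⟨a, b, c, d, h, rfl⟩ := hE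
  rw [edgeVerts_cycEdges] at hx
  simp only [mem_insert, mem_singleton] at hx
  rcases hx with rfl | rfl | rfl | rfl
  · exact ⟨b, c, d, h, rfl⟩
  · exact ⟨c, d, a, (List.nodup_rotate (n := 1)).2 h, cycEdges_rotate ..⟩
  · exact ⟨d, a, b, (List.nodup_rotate (n := 2)).2 h, by rw [cycEdges_rotate, cycEdges_rotate]⟩
  · exact ⟨a, b, c, (List.nodup_rotate (n := 3)).2 h,
      by rw [cycEdges_rotate, cycEdges_rotate, cycEdges_rotate]⟩

theorem exists_eq_cycEdges_of_mem_edge (hE : IsFourCycle E) {x y : V} (hxy : s(x, y) ∈ E) :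
    ∃ u v, ([x, y, u, v] : List V).Nodup ∧ E = cycEdges x y u v := by
  obtain ⟨u, v, w, h, rfl⟩ :=
    hE.exists_eq_cycEdges_of_mem (mem_edgeVerts.2 ⟨_, hxy, Sym2.mem_mk_left x y⟩)
  simp only [mem_cycEdges, Sym2.eq_iff] at hxy
  obtain rfl | rfl : y = u ∨ y = w := by simp at h; grind
  · exact ⟨v, w, h, rfl⟩
  · exact ⟨v, u, by simp at h ⊢; tauto, cycEdges_reverse ..⟩

theorem exists_eq_cycEdges_of_not_mem_edge (hE : IsFourCycle E) {x y : V}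
    (hx : x ∈ edgeVerts E) (hy : y ∈ edgeVerts E) (hxy : x ≠ y) (hnot : s(x, y) ∉ E) :
    ∃ u v, ([x, u, y, v] : List V).Nodup ∧ E = cycEdges x u y v := by
  obtain ⟨u, v, w, h, rfl⟩ := hE.exists_eq_cycEdges_of_mem hx
  simp only [edgeVerts_cycEdges, mem_insert, mem_singleton] at hy
  simp only [mem_cycEdges, Sym2.eq_iff, not_or] at hnot
  obtain rfl : y = v := by grind
  exact ⟨u, w, h, rfl⟩

theorem mem_or_mem (hE : IsFourCycle E) {x y z : V} (hx : x ∈ edgeVerts E)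
    (hy : y ∈ edgeVerts E) (hz : z ∈ edgeVerts E) (hxy : x ≠ y) (hxz : x ≠ z)
    (hyz : y ≠ z) :
    s(x, y) ∈ E ∨ s(x, z) ∈ E := by
  by_contra! hnot
  obtain ⟨u, v, h, rfl⟩ := hE.exists_eq_cycEdges_of_not_mem_edge hx hy hxy hnot.1
  simp only [edgeVerts_cycEdges, mem_insert, mem_singleton] at hz
  simp only [mem_cycEdges, Sym2.eq_iff, not_or] at hnot
  grind

end IsFourCycle

theorem card_inter_edgeVerts_le_two {E F : Finset (Sym2 V)} (hE : IsFourCycle E)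
    (hF : IsFourCycle F) (hEF : Disjoint E F) :
    (edgeVerts E ∩ edgeVerts F).card ≤ 2 := by
  by_contra! h3
  obtain ⟨x, hx, y, hy, z, hz, hxy, hxz, hyz⟩ := two_lt_card.1 h3
  rw [mem_inter] at hx hy hz
  have hE₁ := hE.mem_or_mem hx.1 hy.1 hz.1 hxy hxz hyz
  have hE₂ := hE.mem_or_mem hy.1 hx.1 hz.1 hxy.symm hyz hxz
  have hE₃ := hE.mem_or_mem hz.1 hx.1 hy.1 hxz.symm hyz.symm hxy
  have hF₁ := hF.mem_or_mem hx.2 hy.2 hz.2 hxy hxz hyz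
  have hF₂ := hF.mem_or_mem hy.2 hx.2 hz.2 hxy.symm hyz hxz
  have hF₃ := hF.mem_or_mem hz.2 hx.2 hy.2 hxz.symm hyz.symm hxy
  rw [Sym2.eq_swap (a := y) (b := x)] at hE₂ hF₂
  rw [Sym2.eq_swap (a := z) (b := x), Sym2.eq_swap (a := z) (b := y)] at hE₃ hF₃
  have hxy' : s(x, y) ∈ E → s(x, y) ∉ F := fun h => disjoint_left.1 hEF h
  have hxz' : s(x, z) ∈ E → s(x, z) ∉ F := fun h => disjoint_left.1 hEF h
  have hyz' : s(y, z) ∈ E → s(y, z) ∉ F := fun h => disjoint_left.1 hEF h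
  tauto

section Classification

variable {E F : Finset (Sym2 V)}

theorem card_union_add_card_inter_edgeVerts (hE : IsFourCycle E) (hF : IsFourCycle F) :
    (edgeVerts E ∪ edgeVerts F).card + (edgeVerts E ∩ edgeVerts F).card = 8 := by
  rw [card_union_add_card_inter, hE.card_edgeVerts, hF.card_edgeVerts]

theorem exists_of_card_union_eq_eight (hE : IsFourCycle E) (hF : IsFourCycle F)
    (h8 : (edgeVerts E ∪ edgeVerts F).card = 8) :
    ∃ a b c d e f g h : V, ([a, b, c, d, e, f, g, h] : List V).Nodup ∧
      ({E, F} : Finset (Finset (Sym2 V))) = {cycEdges a b c d, cycEdges e f g h} := by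
  obtain ⟨a, b, c, d, -, rfl⟩ := hE
  obtain ⟨e, f, g, h, -, rfl⟩ := hF
  refine ⟨a, b, c, d, e, f, g, h, nodup_of_toFinset_eq ?_ h8, rfl⟩
  ext; simp [edgeVerts_cycEdges]; grind

theorem exists_of_card_union_eq_seven (hE : IsFourCycle E) (hF : IsFourCycle F)
    (h7 : (edgeVerts E ∪ edgeVerts F).card = 7) :
    ∃ a b c d e f g : V, ([a, b, c, d, e, f, g] : List V).Nodup ∧
      ({E, F} : Finset (Finset (Sym2 V))) = {cycEdges a b c d, cycEdges a e f g} := by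
  have h1 : (edgeVerts E ∩ edgeVerts F).card = 1 := by
    have := card_union_add_card_inter_edgeVerts hE hF; omega
  obtain ⟨x, hI⟩ := card_eq_one.1 h1
  have hx : x ∈ edgeVerts E ∩ edgeVerts F := hI ▸ mem_singleton_self x
  obtain ⟨b, c, d, -, rfl⟩ := hE.exists_eq_cycEdges_of_mem (mem_inter.1 hx).1
  obtain ⟨e, f, g, -, rfl⟩ := hF.exists_eq_cycEdges_of_mem (mem_inter.1 hx).2
  refine ⟨x, b, c, d, e, f, g, nodup_of_toFinset_eq ?_ h7, rfl⟩
  ext; simp [edgeVerts_cycEdges]; grind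

theorem exists_of_shared_pair_mem_edge (hE : IsFourCycle E) (hF : IsFourCycle F) {x y : V}
    (hx : x ∈ edgeVerts E) (hy : y ∈ edgeVerts E) (hxy : x ≠ y) (hxyE : s(x, y) ∉ E)
    (hxyF : s(x, y) ∈ F) (h6 : (edgeVerts E ∪ edgeVerts F).card = 6) :
    ∃ a b c d e f : V, ([a, b, c, d, e, f] : List V).Nodup ∧
      ({E, F} : Finset (Finset (Sym2 V))) = {cycEdges a b c d, cycEdges a c e f} := by
  obtain ⟨b, d, -, rfl⟩ := hE.exists_eq_cycEdges_of_not_mem_edge hx hy hxy hxyE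
  obtain ⟨e, f, -, rfl⟩ := hF.exists_eq_cycEdges_of_mem_edge hxyF
  refine ⟨x, b, y, d, e, f, nodup_of_toFinset_eq ?_ h6, rfl⟩
  ext; simp [edgeVerts_cycEdges]; grind

theorem exists_of_shared_pair_not_mem_edge (hE : IsFourCycle E) (hF : IsFourCycle F) {x y : V}
    (hx : x ∈ edgeVerts E ∩ edgeVerts F) (hy : y ∈ edgeVerts E ∩ edgeVerts F)
    (hxy : x ≠ y) (hxyE : s(x, y) ∉ E) (hxyF : s(x, y) ∉ F)
    (h6 : (edgeVerts E ∪ edgeVerts F).card = 6) :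
    ∃ a b c d e f : V, ([a, b, c, d, e, f] : List V).Nodup ∧
      ({E, F} : Finset (Finset (Sym2 V))) = {cycEdges a b c d, cycEdges a e c f} := by
  rw [mem_inter] at hx hy
  obtain ⟨b, d, -, rfl⟩ := hE.exists_eq_cycEdges_of_not_mem_edge hx.1 hy.1 hxy hxyE
  obtain ⟨e, f, -, rfl⟩ := hF.exists_eq_cycEdges_of_not_mem_edge hx.2 hy.2 hxy hxyF
  refine ⟨x, b, y, d, e, f, nodup_of_toFinset_eq ?_ h6, rfl⟩
  ext; simp [edgeVerts_cycEdges]; grind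

theorem exists_of_card_union_eq_six (hE : IsFourCycle E) (hF : IsFourCycle F)
    (hEF : Disjoint E F) (h6 : (edgeVerts E ∪ edgeVerts F).card = 6) :
    ∃ a b c d e f : V, ([a, b, c, d, e, f] : List V).Nodup ∧
      (({E, F} : Finset (Finset (Sym2 V))) = {cycEdges a b c d, cycEdges a e c f} ∨
       ({E, F} : Finset (Finset (Sym2 V))) = {cycEdges a b c d, cycEdges a c e f}) := by
  have h2 : (edgeVerts E ∩ edgeVerts F).card = 2 := by
    have := card_union_add_card_inter_edgeVerts hE hF; omega
  obtain ⟨x, y, hxy, hI⟩ := card_eq_two.1 h2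
  have hx : x ∈ edgeVerts E ∩ edgeVerts F := by simp [hI]
  have hy : y ∈ edgeVerts E ∩ edgeVerts F := by simp [hI]
  by_cases hxyE : s(x, y) ∈ E
  · rw [union_comm] at h6
    obtain ⟨a, b, c, d, e, f, h, hFE⟩ := exists_of_shared_pair_mem_edge hF hE
      (mem_inter.1 hx).2 (mem_inter.1 hy).2 hxy (disjoint_left.1 hEF hxyE) hxyE h6
    exact ⟨a, b, c, d, e, f, h, Or.inr (pair_comm E F ▸ hFE)⟩
  by_cases hxyF : s(x, y) ∈ F
  · obtain ⟨a, b, c, d, e, f, h, hEF'⟩ := exists_of_shared_pair_mem_edge hE hF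
      (mem_inter.1 hx).1 (mem_inter.1 hy).1 hxy hxyE hxyF h6
    exact ⟨a, b, c, d, e, f, h, Or.inr hEF'⟩
  obtain ⟨a, b, c, d, e, f, h, hEF'⟩ :=
    exists_of_shared_pair_not_mem_edge hE hF hx hy hxy hxyE hxyF h6
  exact ⟨a, b, c, d, e, f, h, Or.inl hEF'⟩

end Classification

section Isomorphism

variable {W : Type*} [DecidableEq W]

theorem Set.InjOn.mk_mem_image_map_iff {φ : V → W} {S : Set V} (hφ : S.InjOn φ)
    {E : Finset (Sym2 V)} (hE : ↑(edgeVerts E) ⊆ S) {x y : V} (hx : x ∈ S) (hy : y ∈ S) :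
    s(φ x, φ y) ∈ E.image (Sym2.map φ) ↔ s(x, y) ∈ E := by
  refine ⟨fun h => ?_, fun h => Finset.mem_image_of_mem _ h⟩
  obtain ⟨e, he, hφe⟩ := Finset.mem_image.1 h
  induction e using Sym2.ind with
  | h u v =>
    have hu : u ∈ S := hE (mem_edgeVerts.2 ⟨_, he, Sym2.mem_mk_left u v⟩)
    have hv : v ∈ S := hE (mem_edgeVerts.2 ⟨_, he, Sym2.mem_mk_right u v⟩)
    rw [Sym2.map_mk, Sym2.eq_iff] at hφe
    rcases hφe with ⟨hux, hvy⟩ | ⟨huy, hvx⟩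
    · rwa [← hφ hu hx hux, ← hφ hv hy hvy]
    · rwa [Sym2.eq_swap, ← hφ hu hy huy, ← hφ hv hx hvx]

theorem Set.InjOn.image_map_inj {φ : V → W} {S : Set V} (hφ : S.InjOn φ)
    {E F : Finset (Sym2 V)} (hE : ↑(edgeVerts E) ⊆ S) (hF : ↑(edgeVerts F) ⊆ S) :
    E.image (Sym2.map φ) = F.image (Sym2.map φ) ↔ E = F := by
  refine ⟨fun h => ?_, congrArg _⟩
  have subset : ∀ {E F : Finset (Sym2 V)}, ↑(edgeVerts E) ⊆ S → ↑(edgeVerts F) ⊆ S →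
      E.image (Sym2.map φ) = F.image (Sym2.map φ) → E ⊆ F := by
    intro E F hE hF h e he
    induction e using Sym2.ind with
    | h x y =>
      have hx : x ∈ S := hE (mem_edgeVerts.2 ⟨_, he, Sym2.mem_mk_left x y⟩)
      have hy : y ∈ S := hE (mem_edgeVerts.2 ⟨_, he, Sym2.mem_mk_right x y⟩)
      rw [← hφ.mk_mem_image_map_iff hF hx hy, ← h]
      exact Finset.mem_image_of_mem _ he
  exact (subset hE hF h).antisymm (subset hF hE h.symm)

theorem image_map_cycEdges (φ : V → W) (a b c d : V) :
    (cycEdges a b c d).image (Sym2.map φ) = cycEdges (φ a) (φ b) (φ c) (φ d) := by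
  simp [cycEdges, image_insert]

theorem diag_not_mem_cycEdges {a b c d : V} (h : ([a, b, c, d] : List V).Nodup) :
    s(a, c) ∉ cycEdges a b c d := by
  simp only [mem_cycEdges, Sym2.eq_iff]
  simp at h
  grind

theorem eq_or_eq_of_pair_eq {a b c d e f t : W} (h : ([a, b, c, d, e, f] : List W).Nodup)
    {G₁ G₂ : Finset (Sym2 W)}
    (hpair : ({G₁, G₂} : Finset (Finset (Sym2 W))) = {cycEdges a b c d, cycEdges a c e f})
    (ht₁ : t ∈ edgeVerts G₁) (ht₂ : t ∈ edgeVerts G₂) : t = a ∨ t = c := by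
  have hall : ∀ G ∈ ({G₁, G₂} : Finset (Finset (Sym2 W))), t ∈ edgeVerts G := by
    simp [ht₁, ht₂]
  rw [hpair] at hall
  have ht₁' := hall _ (mem_insert_self _ _)
  have ht₂' := hall _ (mem_insert_of_mem (mem_singleton_self _))
  simp only [edgeVerts_cycEdges, mem_insert, mem_singleton] at ht₁' ht₂'
  simp at h
  grind

theorem not_configIso_doubleDiamond {a b c d e f : V} {a' b' c' d' e' f' : W}
    (h : ([a, b, c, d, e, f] : List V).Nodup) (h' : ([a', b', c', d', e', f'] : List W).Nodup) :
    ¬ ConfigIso ({cycEdges a b c d, cycEdges a e c f} : Finset (Finset (Sym2 V)))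
      ({cycEdges a' b' c' d', cycEdges a' c' e' f'} : Finset (Finset (Sym2 W))) := by
  rintro ⟨φ, hbij, hmap⟩
  set S : Set V := ↑(({cycEdges a b c d, cycEdges a e c f} : Finset (Finset (Sym2 V))).sup
    edgeVerts)
  set G₁ := (cycEdges a b c d).image (Sym2.map φ) with hG₁
  set G₂ := (cycEdges a e c f).image (Sym2.map φ) with hG₂
  have hsub₁ : ↑(edgeVerts (cycEdges a b c d)) ⊆ S :=
    coe_subset.2 (le_sup (mem_insert_self _ _))
  have hsub₂ : ↑(edgeVerts (cycEdges a e c f)) ⊆ S :=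
    coe_subset.2 (le_sup (mem_insert_of_mem (mem_singleton_self _)))
  have ha := hsub₁ (by simp [edgeVerts_cycEdges] : a ∈ edgeVerts (cycEdges a b c d))
  have hc := hsub₁ (by simp [edgeVerts_cycEdges] : c ∈ edgeVerts (cycEdges a b c d))
  have hC : cycEdges a b c d ≠ cycEdges a e c f := by
    intro heq
    have hab : s(a, b) ∈ cycEdges a e c f := heq ▸ by simp [cycEdges]
    simp only [mem_cycEdges, Sym2.eq_iff] at hab
    simp at h
    grind
  have hpair : ({G₁, G₂} : Finset (Finset (Sym2 W))) =
      {cycEdges a' b' c' d', cycEdges a' c' e' f'} :=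
    eq_of_subset_of_card_le (insert_subset (hmap _ (mem_insert_self _ _))
      (singleton_subset_iff.2 (hmap _ (mem_insert_of_mem (mem_singleton_self _)))))
      (by rw [card_pair ((hbij.injOn.image_map_inj hsub₁ hsub₂).not.2 hC)]; exact card_le_two)
  have hφa := eq_or_eq_of_pair_eq h' hpair (t := φ a)
    (by simp [hG₁, image_map_cycEdges, edgeVerts_cycEdges])
    (by simp [hG₂, image_map_cycEdges, edgeVerts_cycEdges])
  have hφc := eq_or_eq_of_pair_eq h' hpair (t := φ c)
    (by simp [hG₁, image_map_cycEdges, edgeVerts_cycEdges])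
    (by simp [hG₂, image_map_cycEdges, edgeVerts_cycEdges])
  have hφac : φ a ≠ φ c := fun hac => by simp at h; exact h.1.2.1 (hbij.injOn ha hc hac)
  -- `{φ a, φ c}` is the pair of shared vertices of the target, an edge of its second cycle
  have hmem : s(φ a, φ c) ∈ cycEdges a' c' e' f' := by
    have hac : s(φ a, φ c) = s(a', c') := by rw [Sym2.eq_iff]; grind
    rw [hac, mem_cycEdges]
    exact Or.inl rfl
  obtain hD | hD : cycEdges a' c' e' f' = G₁ ∨ cycEdges a' c' e' f' = G₂ := by
    have hD₂ : cycEdges a' c' e' f' ∈ ({G₁, G₂} : Finset (Finset (Sym2 W))) := by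
      simp [hpair]
    simpa using hD₂
  · rw [hD, hbij.injOn.mk_mem_image_map_iff hsub₁ ha hc] at hmem
    exact diag_not_mem_cycEdges (by simp at h ⊢; grind) hmem
  · rw [hD, hbij.injOn.mk_mem_image_map_iff hsub₂ ha hc] at hmem
    exact diag_not_mem_cycEdges (by simp at h ⊢; grind) hmem

end Isomorphism

end FourCycles

/-- Two distinct edge-disjoint 4-cycles cover 6, 7 or 8 vertices (in particular,
no `(5,2)`-configuration exists) and form one of four configurations: one of the two
`(6,2)`-configurations (the double-diamond `{(a,b,c,d), (a,e,c,f)}` or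
`{(a,b,c,d), (a,c,e,f)}`), the `(7,2)`-configuration `{(a,b,c,d), (a,e,f,g)}`, or the
`(8,2)`-configuration `{(a,b,c,d), (e,f,g,h)}`; moreover the two `(6,2)`-forms are
not isomorphic. -/
theorem two_fourCycle_configuration_classification {V : Type*} [DecidableEq V] :
    (∀ E F : Finset (Sym2 V), IsFourCycle E → IsFourCycle F → E ≠ F → Disjoint E F →
      ((edgeVerts E ∪ edgeVerts F).card = 6 ∨ (edgeVerts E ∪ edgeVerts F).card = 7 ∨
        (edgeVerts E ∪ edgeVerts F).card = 8) ∧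
      ((edgeVerts E ∪ edgeVerts F).card = 6 →
        ∃ a b c d e f : V, ([a, b, c, d, e, f] : List V).Nodup ∧
          (({E, F} : Finset (Finset (Sym2 V))) = {cycEdges a b c d, cycEdges a e c f} ∨
           ({E, F} : Finset (Finset (Sym2 V))) = {cycEdges a b c d, cycEdges a c e f})) ∧
      ((edgeVerts E ∪ edgeVerts F).card = 7 →
        ∃ a b c d e f g : V, ([a, b, c, d, e, f, g] : List V).Nodup ∧
          ({E, F} : Finset (Finset (Sym2 V))) = {cycEdges a b c d, cycEdges a e f g}) ∧
      ((edgeVerts E ∪ edgeVerts F).card = 8 →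
        ∃ a b c d e f g h : V, ([a, b, c, d, e, f, g, h] : List V).Nodup ∧
          ({E, F} : Finset (Finset (Sym2 V))) = {cycEdges a b c d, cycEdges e f g h})) ∧
    (∀ a b c d e f a' b' c' d' e' f' : V,
      ([a, b, c, d, e, f] : List V).Nodup → ([a', b', c', d', e', f'] : List V).Nodup →
      ¬ ConfigIso
        ({cycEdges a b c d, cycEdges a e c f} : Finset (Finset (Sym2 V)))
        ({cycEdges a' b' c' d', cycEdges a' c' e' f'} : Finset (Finset (Sym2 V)))) := by
  refine ⟨fun E F hE hF _ hEF => ⟨?_, exists_of_card_union_eq_six hE hF hEF,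
    exists_of_card_union_eq_seven hE hF, exists_of_card_union_eq_eight hE hF⟩,
    fun _ _ _ _ _ _ _ _ _ _ _ _ h h' => not_configIso_doubleDiamond h h'⟩
  have := card_union_add_card_inter_edgeVerts hE hF
  have := card_inter_edgeVerts_le_two hE hF hEF
  omega
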